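/- Let ν ∈ ℂ with Re ν > 0 and let x ∈ ℝ with x > 0. Then x^(2ν−1) · ∫₀^1 e^(−x²·(2−t)) · t^(ν−1) · (1−t)^(−1/2) dt = ∫₀^(2x) e^(−u²/2 − (2x−u)²/2) · u^(ν−1) · (2x−u)^(ν−1) du. (This is the convolution identity (37)–(38): (Γ(ν)Γ(1/2)/Γ(ν+1/2)) · x^(2ν−1) · e^(−2x²) · Φ(ν, ν+1/2; x²) = (f∗f)(2x) where f(t) = t^(ν−1) e^(−t²/2) and ∗ is the Laplace convolution, written with Φ replaced by its Euler integral.) -/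

import Mathlib

open MeasureTheory Complex Set

/-!
With `f t = t ^ (ν - 1) * exp (-t ^ 2 / 2)`, the right-hand integrand is `f u * f (2x - u)`,
which is symmetric about `u = x`; hence the right side is twice the integral over `(0, x)`.
On `(0, x)` substitute `t = u (2x - u) / x² = 1 - (1 - u / x)²`, an increasing bijection onto
`(0, 1)`. Then `u (2x - u) = x² t`, `u² / 2 + (2x - u)² / 2 = x² (2 - t)`, and the Jacobian
`2 (x - u) / x²` cancels against `(1 - t) ^ (-1/2) = x / (x - u)`, so that `x ^ (2ν - 1)` times
the transformed integrand is exactly `2 f u f (2x - u)`.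
-/

theorem intervalIntegral.integral_eq_two_smul_of_reflect {E : Type*} [NormedAddCommGroup E]
    [NormedSpace ℝ E] {f : ℝ → E} {a c : ℝ} (hf : ∀ u, f (2 * c - u) = f u)
    (hint : IntervalIntegrable f volume a c) :
    ∫ u in a..(2 * c - a), f u = (2 : ℝ) • ∫ u in a..c, f u := by
  have hreflect : ∫ u in c..(2 * c - a), f u = ∫ u in a..c, f u := by
    have h := intervalIntegral.integral_comp_sub_left (a := c) (b := 2 * c - a) f (2 * c)
    rwa [sub_sub_cancel, show 2 * c - c = c by ring, funext hf] at h
  have hint' : IntervalIntegrable f volume c (2 * c - a) := by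
    have h := hint.comp_sub_left (2 * c)
    rwa [show 2 * c - c = c by ring, funext hf, IntervalIntegrable.symm_iff] at h
  rw [← intervalIntegral.integral_add_adjacent_intervals hint hint', hreflect, two_smul]

theorem image_mul_two_mul_sub_div_sq_Ioo {x : ℝ} (hx : 0 < x) :
    (fun u => u * (2 * x - u) / x ^ 2) '' Ioo 0 x = Ioo 0 1 := by
  refine Subset.antisymm ?_ ?_
  · rintro _ ⟨u, ⟨hu0, hux⟩, rfl⟩
    have : 0 < 2 * x - u := by linarith
    constructor
    · positivity
    · rw [div_lt_one (by positivity)]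
      nlinarith
  · have h := intermediate_value_Ioo hx.le
      (f := fun u => u * (2 * x - u) / x ^ 2) (by fun_prop)
    have hx2 : x ^ 2 ≠ 0 := by positivity
    simpa [hx2, show x * (2 * x - x) = x ^ 2 by ring] using h

theorem setIntegral_Ioo_zero_one_eq_comp_quadratic {E : Type*} [NormedAddCommGroup E]
    [NormedSpace ℝ E] {x : ℝ} (hx : 0 < x) (F : ℝ → E) :
    ∫ t in Ioo 0 1, F t =
      ∫ u in Ioo 0 x, (2 * (x - u) / x ^ 2) • F (u * (2 * x - u) / x ^ 2) := by
  have hderiv : ∀ u ∈ Ioo 0 x, HasDerivWithinAt (fun u => u * (2 * x - u) / x ^ 2)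
      (2 * (x - u) / x ^ 2) (Ioo 0 x) u := fun u _ => by
    have h : HasDerivAt (fun u => u * (2 * x - u) / x ^ 2)
        ((1 * (2 * x - u) + u * -1) / x ^ 2) u :=
      ((hasDerivAt_id' u).mul ((hasDerivAt_id' u).const_sub (2 * x))).div_const (x ^ 2)
    rw [show 2 * (x - u) / x ^ 2 = (1 * (2 * x - u) + u * -1) / x ^ 2 by ring]
    exact h.hasDerivWithinAt
  have hinj : InjOn (fun u => u * (2 * x - u) / x ^ 2) (Ioo 0 x) := by
    intro u hu v hv huv
    simp only [div_left_inj' (pow_ne_zero 2 hx.ne')] at huv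
    nlinarith [hu.2, hv.2]
  rw [← image_mul_two_mul_sub_div_sq_Ioo hx,
    integral_image_eq_integral_abs_deriv_smul measurableSet_Ioo hderiv hinj]
  refine setIntegral_congr_fun measurableSet_Ioo fun u hu => ?_
  have : 0 < x - u := by linarith [hu.2]
  rw [abs_of_pos (by positivity)]

theorem ofReal_sq_cpow_neg_half {r : ℝ} (hr : 0 ≤ r) :
    ((r ^ 2 : ℝ) : ℂ) ^ (-(1 : ℂ) / 2) = (r : ℂ)⁻¹ := by
  rw [show -(1 : ℂ) / 2 = ((-(1 / 2) : ℝ) : ℂ) by push_cast; ring,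
    ← ofReal_cpow (by positivity), Real.rpow_neg (by positivity), ← Real.sqrt_eq_rpow,
    Real.sqrt_sq hr, ofReal_inv]

theorem ofReal_cpow_mul_ofReal_cpow_of_mul_eq {u v x t : ℝ} (hu : 0 ≤ u) (hv : 0 ≤ v)
    (hx : 0 ≤ x) (ht : 0 ≤ t) (h : u * v = x * x * t) (ν : ℂ) :
    (u : ℂ) ^ ν * (v : ℂ) ^ ν = (x : ℂ) ^ ν * (x : ℂ) ^ ν * (t : ℂ) ^ ν := by
  rw [← mul_cpow_ofReal_nonneg hu hv, ← ofReal_mul, h, ofReal_mul,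
    mul_cpow_ofReal_nonneg (mul_nonneg hx hx) ht, ofReal_mul, mul_cpow_ofReal_nonneg hx hx]

theorem cpow_two_mul_sub_one {x : ℂ} (hx : x ≠ 0) (ν : ℂ) :
    x ^ (2 * ν - 1) = x ^ (ν - 1) * x ^ (ν - 1) * x := by
  rw [show 2 * ν - 1 = (ν - 1) + (ν - 1) + 1 by ring, cpow_add _ _ hx, cpow_add _ _ hx,
    cpow_one]

noncomputable def powMulGaussian (ν : ℂ) (t : ℝ) : ℂ :=
  (t : ℂ) ^ (ν - 1) * exp (-(t : ℂ) ^ 2 / 2)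

theorem intervalIntegrable_powMulGaussian {ν : ℂ} (hν : 0 < ν.re) (a b : ℝ) :
    IntervalIntegrable (powMulGaussian ν) volume a b :=
  (intervalIntegral.intervalIntegrable_cpow' (by simpa using hν)).mul_continuousOn
    (by fun_prop)

theorem continuousAt_powMulGaussian (ν : ℂ) {t : ℝ} (ht : 0 < t) :
    ContinuousAt (powMulGaussian ν) t :=
  (continuousAt_ofReal_cpow_const t (ν - 1) (Or.inr ht.ne')).mul (by fun_prop)

theorem setIntegral_powMulGaussian_mul_reflect_eq_two_mul {ν : ℂ} (hν : 0 < ν.re) {x : ℝ}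
    (hx : 0 < x) :
    ∫ u in Ioo 0 (2 * x), powMulGaussian ν u * powMulGaussian ν (2 * x - u) =
      2 * ∫ u in Ioo 0 x, powMulGaussian ν u * powMulGaussian ν (2 * x - u) := by
  have hint : IntervalIntegrable (fun u => powMulGaussian ν u * powMulGaussian ν (2 * x - u))
      volume 0 x := by
    refine (intervalIntegrable_powMulGaussian hν 0 x).mul_continuousOn fun u hu => ?_
    rw [uIcc_of_le hx.le] at hu
    exact ((continuousAt_powMulGaussian ν (by linarith [hu.2])).comp
      (by fun_prop)).continuousWithinAt
  have h := intervalIntegral.integral_eq_two_smul_of_reflect (c := x)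
    (fun u => by rw [sub_sub_cancel, mul_comm]) hint
  rw [sub_zero, intervalIntegral.integral_of_le (by linarith),
    intervalIntegral.integral_of_le hx.le, integral_Ioc_eq_integral_Ioo,
    integral_Ioc_eq_integral_Ioo] at h
  rw [h, real_smul, ofReal_ofNat]

theorem cpow_mul_jacobian_smul_kummerIntegrand_eq {ν : ℂ} {x u t : ℝ} (hu : u ∈ Ioo 0 x)
    (ht : t * x ^ 2 = u * (2 * x - u)) :
    (x : ℂ) ^ (2 * ν - 1) * ((2 * (x - u) / x ^ 2) •
      (exp (-(x : ℂ) ^ 2 * (2 - (t : ℂ))) * (t : ℂ) ^ (ν - 1) *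
        ((1 : ℂ) - (t : ℂ)) ^ (-(1 : ℂ) / 2))) =
      2 * (powMulGaussian ν u * powMulGaussian ν (2 * x - u)) := by
  obtain ⟨hu0, hux⟩ := hu
  have hx : 0 < x := hu0.trans hux
  have hxu : 0 < x - u := by linarith
  have hxc : (x : ℂ) ≠ 0 := by exact_mod_cast hx.ne'
  have hxuc : (x : ℂ) - u ≠ 0 := sub_ne_zero.mpr (by exact_mod_cast hux.ne')
  have htc : (t : ℂ) * (x : ℂ) ^ 2 = u * (2 * x - u) := by exact_mod_cast ht
  have hpow := ofReal_cpow_mul_ofReal_cpow_of_mul_eq (t := t) hu0.le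
    (by linarith : 0 ≤ 2 * x - u) hx.le (by nlinarith) (by linear_combination -ht) (ν - 1)
  have hsqrt : (1 - (t : ℂ)) ^ (-(1 : ℂ) / 2) = (((x - u) / x : ℝ) : ℂ)⁻¹ := by
    rw [← ofReal_sq_cpow_neg_half (div_nonneg hxu.le hx.le)]
    congr 1
    push_cast
    field_simp
    linear_combination -htc
  have hexp : -(x : ℂ) ^ 2 * (2 - (t : ℂ)) =
      -(u : ℂ) ^ 2 / 2 + -((2 * x - u : ℝ) : ℂ) ^ 2 / 2 := by
    push_cast
    linear_combination htc
  unfold powMulGaussian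
  rw [cpow_two_mul_sub_one hxc, hsqrt, hexp, exp_add, mul_mul_mul_comm, hpow, real_smul]
  push_cast
  field_simp

/-- Convolution identity (37)-(38): `x^(2ν-1) ∫₀^1 e^(-x²(2-t)) t^(ν-1) (1-t)^(-1/2) dt
= ∫₀^(2x) e^(-u²/2-(2x-u)²/2) u^(ν-1) (2x-u)^(ν-1) du`, i.e.
`(Γ(ν)Γ(1/2)/Γ(ν+1/2)) x^(2ν-1) e^(-2x²) Φ(ν, ν+1/2; x²) = (f∗f)(2x)` with
`f(t) = t^(ν-1) e^(-t²/2)`, Φ written via its Euler integral. -/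
theorem phi_as_laplace_convolution
    (ν : ℂ) (hν : 0 < ν.re) (x : ℝ) (hx : 0 < x) :
    (x:ℂ) ^ (2 * ν - 1) *
      (∫ t in Ioo (0:ℝ) 1,
        Complex.exp (-(x:ℂ)^2 * (2 - (t:ℂ))) * (t:ℂ) ^ (ν - 1) *
          ((1:ℂ) - (t:ℂ)) ^ (-(1:ℂ)/2)) =
    ∫ u in Ioo (0:ℝ) (2 * x),
      Complex.exp (-(u:ℂ)^2 / 2 - ((2 * x - u : ℝ) : ℂ)^2 / 2) *
        (u:ℂ) ^ (ν - 1) * ((2 * x - u : ℝ) : ℂ) ^ (ν - 1) := by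
  rw [setIntegral_Ioo_zero_one_eq_comp_quadratic hx, ← integral_const_mul,
    setIntegral_congr_fun measurableSet_Ioo fun u hu =>
      cpow_mul_jacobian_smul_kummerIntegrand_eq hu (by field_simp),
    integral_const_mul, ← setIntegral_powMulGaussian_mul_reflect_eq_two_mul hν hx]
  refine setIntegral_congr_fun measurableSet_Ioo fun u _ => ?_
  simp only [powMulGaussian, sub_eq_add_neg, exp_add, neg_div]
  ring
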